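/- arXiv:1806.06310 — 2 statements merged into one kernel-verified Lean document; each statement's English description precedes it below -/
import Mathlib

section
/- Under the same hypotheses, the reduced resolvent S(s) = lim_{z→0} Q(s)(L(s) − z)⁻¹ Q(s), where Q(s) = Id − P(s), also satisfies S^(j)(s₀) = 0 for j = 1,...,k whenever L^(j)(s₀) = 0 for j = 1,...,k. -/
attribute [local instance] Matrix.frobeniusNormedAddCommGroup Matrix.frobeniusNormedSpace

/-- The trace norm (sum of singular values, i.e. of the square roots of the eigenvalues
of `Aᴴ * A`) of a complex square matrix. -/
noncomputable def traceNorm {m : Type*} [Fintype m] [DecidableEq m]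
    (A : Matrix m m ℂ) : ℝ :=
  ∑ i, Real.sqrt ((Matrix.isHermitian_mul_conjTranspose_self A.conjTranspose).eigenvalues i)

noncomputable instance matrixCLMNormedAddCommGroup {n : ℕ} :
    NormedAddCommGroup (Matrix (Fin n) (Fin n) ℂ →L[ℂ] Matrix (Fin n) (Fin n) ℂ) :=
  ContinuousLinearMap.toNormedAddCommGroup

noncomputable instance matrixCLMNormedSpace {n : ℕ} :
    NormedSpace ℂ (Matrix (Fin n) (Fin n) ℂ →L[ℂ] Matrix (Fin n) (Fin n) ℂ) :=
  ContinuousLinearMap.toNormedSpace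

/-! For `A` near `L s₀` the circle `‖z‖ = R` lies in the resolvent set of `A`, so the Riesz
projection `P(A) = (2πi)⁻¹ ∮ (z - A)⁻¹ dz` and, by Cauchy's formula applied to the removable
singularity of `z ↦ Q(A) (A - z)⁻¹ Q(A)` at `0`, the reduced resolvent
`S(A) = (2πi)⁻¹ ∮ z⁻¹ Q(A) (A - z)⁻¹ Q(A) dz` are contour integrals of integrands that are `C^k`
jointly in `(A, z)`. Differentiating under the integral sign, `A ↦ S(A)` is `C^k` near `L s₀`.
Since the given family satisfies `S s = S(L s)` near `s₀`, Faà di Bruno's formula writes each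
derivative of order `1, …, k` of `S` at `s₀` as a sum of terms each containing a derivative of `L`
of order between `1` and `k`, all of which vanish. -/

open Filter Set Function Topology Metric Complex Real MeasureTheory

section Composition
variable {𝕜 : Type*} [NontriviallyNormedField 𝕜] {E F G : Type*}
  [NormedAddCommGroup E] [NormedSpace 𝕜 E] [NormedAddCommGroup F] [NormedSpace 𝕜 F]
  [NormedAddCommGroup G] [NormedSpace 𝕜 G]

theorem iteratedFDeriv_comp_eq_zero {g : F → G} {f : E → F} {x : E} {k : ℕ}
    (hg : ContDiffAt 𝕜 k g (f x)) (hf : ContDiffAt 𝕜 k f x)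
    (hflat : ∀ j, 1 ≤ j → j ≤ k → iteratedFDeriv 𝕜 j f x = 0) {j : ℕ} (hj : 1 ≤ j)
    (hjk : j ≤ k) : iteratedFDeriv 𝕜 j (g ∘ f) x = 0 := by
  rw [iteratedFDeriv_comp hg hf (by exact_mod_cast hjk)]
  refine Finset.sum_eq_zero fun c _ => ?_
  ext v
  have hzero : c.applyOrderedFinpartition (fun m => ftaylorSeries 𝕜 f x (c.partSize m)) v = 0 := by
    ext m
    simp only [OrderedFinpartition.applyOrderedFinpartition_apply, ftaylorSeries,
      hflat _ (c.partSize_pos m) ((c.partSize_le m).trans hjk)]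
    rfl
  have : Nonempty (Fin c.length) := ⟨⟨0, c.length_pos (by omega)⟩⟩
  simp only [FormalMultilinearSeries.compAlongOrderedFinpartition_apply, hzero,
    ContinuousMultilinearMap.map_zero, zero_apply]

theorem iteratedDeriv_eq_zero_iff {f : 𝕜 → F} {x : 𝕜} {n : ℕ} :
    iteratedDeriv n f x = 0 ↔ iteratedFDeriv 𝕜 n f x = 0 := by
  rw [iteratedDeriv_eq_equiv_comp, Function.comp_apply, LinearIsometryEquiv.map_eq_zero_iff]

theorem iteratedDeriv_comp_eq_zero {g : F → G} {f : 𝕜 → F} {x : 𝕜} {k : ℕ}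
    (hg : ContDiffAt 𝕜 k g (f x)) (hf : ContDiffAt 𝕜 k f x)
    (hflat : ∀ j, 1 ≤ j → j ≤ k → iteratedDeriv j f x = 0) {j : ℕ} (hj : 1 ≤ j)
    (hjk : j ≤ k) : iteratedDeriv j (g ∘ f) x = 0 :=
  iteratedDeriv_eq_zero_iff.2 <| iteratedFDeriv_comp_eq_zero hg hf
    (fun i hi hik => iteratedDeriv_eq_zero_iff.1 (hflat i hi hik)) hj hjk

end Composition

section BanachAlgebra
variable {𝒜 : Type*} [NormedRing 𝒜] [NormedAlgebra ℂ 𝒜]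

theorem isUnit_sub_smul_one_of_spectrum_inter_ball {A : 𝒜} {R : ℝ}
    (hres : ∀ z : ℂ, ‖z‖ = R → IsUnit (z • (1 : 𝒜) - A))
    (hgap : spectrum ℂ A ∩ ball (0 : ℂ) R = {0}) {z : ℂ} (hz : z ∈ closedBall (0 : ℂ) R \ {0}) :
    IsUnit (A - z • (1 : 𝒜)) := by
  rw [← neg_sub, IsUnit.neg_iff]
  obtain ⟨hzR, hz0⟩ := hz
  rcases (mem_closedBall_zero_iff.1 hzR).lt_or_eq with hlt | heq
  · have : z ∉ spectrum ℂ A := fun hmem =>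
      hz0 (hgap ▸ ⟨hmem, mem_ball_zero_iff.2 hlt⟩ : z ∈ ({0} : Set ℂ))
    simpa [Algebra.algebraMap_eq_smul_one] using spectrum.notMem_iff.1 this
  · exact hres z heq

variable [CompleteSpace 𝒜]

theorem isOpen_setOf_forall_norm_eq_isUnit_smul_one_sub (R : ℝ) :
    IsOpen {A : 𝒜 | ∀ z : ℂ, ‖z‖ = R → IsUnit (z • (1 : 𝒜) - A)} := by
  refine isOpen_iff_mem_nhds.2 fun A₀ hA₀ => ?_
  have hsphere : ∀ z ∈ sphere (0 : ℂ) R, ∀ᶠ p : 𝒜 × ℂ in 𝓝 (A₀, z), IsUnit (p.2 • (1 : 𝒜) - p.1) :=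
    fun z hz => (Continuous.continuousAt (x := (A₀, z))
      (by fun_prop : Continuous fun p : 𝒜 × ℂ => p.2 • (1 : 𝒜) - p.1)).eventually_mem
        (Units.isOpen.mem_nhds (hA₀ z (mem_sphere_zero_iff_norm.1 hz)))
  filter_upwards [(isCompact_sphere (0 : ℂ) R).eventually_forall_of_forall_eventually
    (P := fun A z => IsUnit (z • (1 : 𝒜) - A)) hsphere]
    with A hA z hz using hA z (mem_sphere_zero_iff_norm.2 hz)

theorem IsUnit.contDiffAt_ringInverse {a : 𝒜} (ha : IsUnit a) {n : WithTop ℕ∞} :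
    ContDiffAt ℂ n Ring.inverse a := by
  simpa only [ha.unit_spec] using _root_.contDiffAt_ringInverse ℂ (n := n) ha.unit

theorem differentiableAt_ringInverse_sub_smul_one {A : 𝒜} {z : ℂ} (hz : IsUnit (A - z • (1 : 𝒜))) :
    DifferentiableAt ℂ (fun w : ℂ => Ring.inverse (A - w • (1 : 𝒜))) z :=
  ((hz.contDiffAt_ringInverse (n := 1)).differentiableAt one_ne_zero).comp z
    ((differentiableAt_const A).sub (differentiableAt_id.smul_const 1))

end BanachAlgebra

theorem circleIntegral_inv_smul_of_tendsto {E : Type*} [NormedAddCommGroup E] [NormedSpace ℂ E]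
    [CompleteSpace E] {f : ℂ → E} {R : ℝ} (hR : 0 < R) {a : E}
    (hf : ∀ z ∈ closedBall (0 : ℂ) R \ {0}, DifferentiableAt ℂ f z)
    (hlim : Tendsto f (𝓝[≠] 0) (𝓝 a)) :
    (∮ z in C(0, R), z⁻¹ • f z) = (2 * π * I) • a := by
  classical
  set g := update f 0 a
  have hgf : ∀ z ≠ 0, g =ᶠ[𝓝 z] f := fun z hz =>
    (eventually_ne_nhds hz).mono fun w hw => update_of_ne hw _ _
  have hg_diff : ∀ z ∈ closedBall (0 : ℂ) R \ {0}, DifferentiableAt ℂ g z := fun z hz =>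
    (hf z hz).congr_of_eventuallyEq (hgf z hz.2)
  have hg_cont : ContinuousOn g (closedBall 0 R) := fun z hz => by
    rcases eq_or_ne z 0 with rfl | hz0
    · exact (continuousAt_update_same.2 hlim).continuousWithinAt
    · exact (hg_diff z ⟨hz, hz0⟩).continuousAt.continuousWithinAt
  have hcauchy := circleIntegral_sub_inv_smul_of_differentiable_on_off_countable
    (countable_singleton 0) (mem_ball_self hR) hg_cont
    fun z hz => hg_diff z ⟨ball_subset_closedBall hz.1, hz.2⟩
  rw [← update_self 0 a f, ← hcauchy]
  refine circleIntegral.integral_congr hR.le fun z hz => ?_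
  have hz0 : z ≠ 0 := by rintro rfl; simp [hR.ne] at hz
  simp [g, update_of_ne hz0]

-- `E` and `G` share a universe so that the derivative, valued in `E →L[ℝ] G`, can be fed back
-- into the induction on the order of smoothness.
universe u

section ParametricIntegral

theorem IsCompact.exists_eventually_forall_norm_le {X Y G : Type*} [TopologicalSpace X]
    [TopologicalSpace Y] [NormedAddCommGroup G] {K : Set Y} (hK : IsCompact K) {F : X → Y → G}
    {x₀ : X} (hF : ∀ t ∈ K, ContinuousAt (uncurry F) (x₀, t)) :
    ∃ C, ∀ᶠ x in 𝓝 x₀, ∀ t ∈ K, ‖F x t‖ ≤ C := by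
  obtain ⟨C, hC⟩ := hK.exists_bound_of_continuousOn fun t ht =>
    ((hF t ht).comp (Continuous.prodMk_right x₀).continuousAt).continuousWithinAt
  refine ⟨C + 1, hK.eventually_forall_of_forall_eventually fun t ht => ?_⟩
  filter_upwards [(hF t ht).norm.eventually (gt_mem_nhds (lt_add_one _))] with p hp
  exact hp.le.trans (by gcongr; exact hC t ht)

theorem continuousOn_intervalIntegral_of_continuousOn_prod {E G : Type*} [TopologicalSpace E]
    [FirstCountableTopology E] [NormedAddCommGroup G] [NormedSpace ℝ G] {F : E → ℝ → G}
    {U : Set E} {a b : ℝ} (hU : IsOpen U)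
    (hF : ContinuousOn (uncurry F) (U ×ˢ univ)) :
    ContinuousOn (fun x => ∫ t in a..b, F x t) U := by
  intro x₀ hx₀
  have hFat : ∀ x ∈ U, ∀ t, ContinuousAt (uncurry F) (x, t) := fun x hx t =>
    hF.continuousAt ((hU.prod isOpen_univ).mem_nhds ⟨hx, trivial⟩)
  obtain ⟨C, hC⟩ := (isCompact_uIcc (a := a) (b := b)).exists_eventually_forall_norm_le
    fun t _ => hFat x₀ hx₀ t
  refine (intervalIntegral.continuousAt_of_dominated_interval (bound := fun _ => C) ?_ ?_
    intervalIntegrable_const ?_).continuousWithinAt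
  · filter_upwards [hU.mem_nhds hx₀] with x hx
    exact (continuous_iff_continuousAt.2 fun t =>
      (hFat x hx t).comp (Continuous.prodMk_right x).continuousAt).aestronglyMeasurable
  · filter_upwards [hC] with x hx
    exact ae_of_all _ fun t ht => hx t (uIoc_subset_uIcc ht)
  · exact ae_of_all _ fun t _ => (hFat x₀ hx₀ t).comp (f := fun x => (x, t)) (by fun_prop)

variable {E G : Type*} [NormedAddCommGroup E] [NormedSpace ℝ E] [NormedAddCommGroup G]
  [NormedSpace ℝ G] {F : E → ℝ → G} {U : Set E} {a b : ℝ}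

theorem hasFDerivAt_intervalIntegral_of_contDiffOn_prod (hU : IsOpen U)
    (hF : ContDiffOn ℝ 1 (uncurry F) (U ×ˢ univ)) {x₀ : E} (hx₀ : x₀ ∈ U) :
    HasFDerivAt (fun x => ∫ t in a..b, F x t)
      (∫ t in a..b, fderiv ℝ (uncurry F) (x₀, t) ∘L .inl ℝ E ℝ) x₀ := by
  have hopen : IsOpen (U ×ˢ (univ : Set ℝ)) := hU.prod isOpen_univ
  have hdiff : ∀ x ∈ U, ∀ t, HasFDerivAt (F · t) (fderiv ℝ (uncurry F) (x, t) ∘L .inl ℝ E ℝ) x :=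
    fun x hx t => ((hF.differentiableOn one_ne_zero).differentiableAt
      (hopen.mem_nhds ⟨hx, trivial⟩)).hasFDerivAt.comp x (hasFDerivAt_prodMk_left x t)
  have hcont : ContinuousOn (fun p : E × ℝ => fderiv ℝ (uncurry F) p ∘L .inl ℝ E ℝ) (U ×ˢ univ) :=
    (hF.continuousOn_fderiv_of_isOpen hopen le_rfl).clm_comp continuousOn_const
  have hcontAt : ∀ x ∈ U, ∀ t, ContinuousAt (fun p : E × ℝ => fderiv ℝ (uncurry F) p ∘L .inl ℝ E ℝ) (x, t) :=
    fun x hx t => hcont.continuousAt (hopen.mem_nhds ⟨hx, trivial⟩)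
  obtain ⟨C, hC⟩ := (isCompact_uIcc (a := a) (b := b)).exists_eventually_forall_norm_le
    (F := fun x t => fderiv ℝ (uncurry F) (x, t) ∘L .inl ℝ E ℝ) fun t _ => hcontAt x₀ hx₀ t
  have hF_cont : ∀ x ∈ U, Continuous (F x) := fun x hx => continuous_iff_continuousAt.2 fun t =>
    (hF.continuousOn.continuousAt (hopen.mem_nhds ⟨hx, trivial⟩)).comp
      (Continuous.prodMk_right x).continuousAt
  refine intervalIntegral.hasFDerivAt_integral_of_dominated_of_fderiv_le (𝕜 := ℝ) (μ := volume)
    (F' := fun x t => fderiv ℝ (uncurry F) (x, t) ∘L .inl ℝ E ℝ) (bound := fun _ => C)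
    (inter_mem hC (hU.mem_nhds hx₀)) ?_ ((hF_cont x₀ hx₀).intervalIntegrable _ _) ?_ ?_
    intervalIntegrable_const ?_
  · filter_upwards [hU.mem_nhds hx₀] with x hx
    exact (hF_cont x hx).aestronglyMeasurable
  · exact (continuous_iff_continuousAt.2 fun t =>
      (hcontAt x₀ hx₀ t).comp (Continuous.prodMk_right x₀).continuousAt).aestronglyMeasurable
  · exact ae_of_all _ fun t ht x hx => hx.1 t (uIoc_subset_uIcc ht)
  · exact ae_of_all _ fun t _ x hx => hdiff x hx.2 t

theorem contDiffOn_intervalIntegral_of_contDiffOn_prod {E G : Type u} [NormedAddCommGroup E]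
    [NormedSpace ℝ E] [NormedAddCommGroup G] [NormedSpace ℝ G] {U : Set E} (hU : IsOpen U)
    {a b : ℝ} {k : ℕ} {F : E → ℝ → G} (hF : ContDiffOn ℝ k (uncurry F) (U ×ˢ univ)) :
    ContDiffOn ℝ k (fun x => ∫ t in a..b, F x t) U := by
  induction k generalizing G with
  | zero =>
    exact contDiffOn_zero.2 (continuousOn_intervalIntegral_of_continuousOn_prod hU
      (contDiffOn_zero.1 hF))
  | succ k ih =>
    have hF1 : ContDiffOn ℝ 1 (uncurry F) (U ×ˢ univ) := hF.of_le (by exact_mod_cast le_add_self)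
    rw [Nat.cast_succ, contDiffOn_succ_iff_fderiv_of_isOpen hU]
    refine ⟨fun x hx => (hasFDerivAt_intervalIntegral_of_contDiffOn_prod hU hF1 hx)
      |>.differentiableAt.differentiableWithinAt, by simp, ?_⟩
    refine (ih (F := fun x t => fderiv ℝ (uncurry F) (x, t) ∘L .inl ℝ E ℝ) ?_).congr
      fun x hx => (hasFDerivAt_intervalIntegral_of_contDiffOn_prod hU hF1 hx).fderiv
    exact (hF.fderiv_of_isOpen (hU.prod isOpen_univ) le_rfl).clm_comp contDiffOn_const

end ParametricIntegral

theorem contDiffOn_circleIntegral {E G : Type u} [NormedAddCommGroup E] [NormedSpace ℝ E]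
    [NormedAddCommGroup G] [NormedSpace ℂ G] {U : Set E} (hU : IsOpen U) {c : ℂ} {R : ℝ} {k : ℕ}
    {F : E → ℂ → G} (hF : ∀ x ∈ U, ∀ z ∈ sphere c |R|, ContDiffAt ℝ k (uncurry F) (x, z)) :
    ContDiffOn ℝ k (fun x => ∮ z in C(c, R), F x z) U := by
  refine contDiffOn_intervalIntegral_of_contDiffOn_prod hU fun p hp => ContDiffAt.contDiffWithinAt ?_
  have hderiv : ContDiff ℝ k (deriv (circleMap c R)) := by
    rw [show deriv (circleMap c R) = fun θ => circleMap 0 R θ * I from funext (deriv_circleMap c R)]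
    exact (contDiff_circleMap 0 R).mul contDiff_const
  exact (hderiv.contDiffAt.comp p contDiff_snd.contDiffAt).smul <|
    (hF p.1 hp.1 _ (circleMap_mem_sphere' c R p.2)).comp p
      (contDiff_fst.prodMk ((contDiff_circleMap c R).comp contDiff_snd)).contDiffAt

section RieszProjection
variable {M : Type u} [NormedAddCommGroup M] [NormedSpace ℂ M]

noncomputable def rieszProjection (R : ℝ) (A : M →L[ℂ] M) : M →L[ℂ] M :=
  (2 * π * I)⁻¹ • ∮ z in C(0, R), Ring.inverse (z • (1 : M →L[ℂ] M) - A)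

noncomputable def reducedResolvent (R : ℝ) (A : M →L[ℂ] M) : M →L[ℂ] M :=
  (2 * π * I)⁻¹ • ∮ z in C(0, R), z⁻¹ • ((1 - rieszProjection R A) ∘L
    Ring.inverse (A - z • (1 : M →L[ℂ] M)) ∘L (1 - rieszProjection R A))

variable [CompleteSpace M]

theorem eq_reducedResolvent_of_tendsto {R : ℝ} (hR : 0 < R) {A S : M →L[ℂ] M}
    (hres : ∀ z : ℂ, ‖z‖ = R → IsUnit (z • (1 : M →L[ℂ] M) - A))
    (hgap : spectrum ℂ A ∩ ball (0 : ℂ) R = {0})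
    (hS : Tendsto (fun z : ℂ => (1 - rieszProjection R A) ∘L
      Ring.inverse (A - z • (1 : M →L[ℂ] M)) ∘L (1 - rieszProjection R A)) (𝓝[≠] 0) (𝓝 S)) :
    S = reducedResolvent R A := by
  rw [reducedResolvent, circleIntegral_inv_smul_of_tendsto hR (fun z hz => ?_) hS,
    inv_smul_smul₀ two_pi_I_ne_zero]
  exact (differentiableAt_const _).mul ((differentiableAt_ringInverse_sub_smul_one
    (isUnit_sub_smul_one_of_spectrum_inter_ball hres hgap hz)).mul (differentiableAt_const _))

theorem contDiffAt_rieszProjection {R : ℝ} (hR : 0 < R) {A : M →L[ℂ] M}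
    (hA : ∀ z : ℂ, ‖z‖ = R → IsUnit (z • (1 : M →L[ℂ] M) - A)) (k : ℕ) :
    ContDiffAt ℝ k (rieszProjection R) A := by
  have hU := isOpen_setOf_forall_norm_eq_isUnit_smul_one_sub (𝒜 := M →L[ℂ] M) R
  refine ((contDiffOn_circleIntegral hU fun B hB z hz => ?_).const_smul _).contDiffAt
    (hU.mem_nhds hA)
  exact ((hB z (by simpa [abs_of_pos hR] using hz)).contDiffAt_ringInverse.comp (B, z)
    ((contDiff_snd.smul contDiff_const).sub contDiff_fst).contDiffAt).restrict_scalars ℝ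

theorem contDiffAt_reducedResolvent {R : ℝ} (hR : 0 < R) {A : M →L[ℂ] M}
    (hA : ∀ z : ℂ, ‖z‖ = R → IsUnit (z • (1 : M →L[ℂ] M) - A)) (k : ℕ) :
    ContDiffAt ℝ k (reducedResolvent R) A := by
  have hU := isOpen_setOf_forall_norm_eq_isUnit_smul_one_sub (𝒜 := M →L[ℂ] M) R
  refine ((contDiffOn_circleIntegral hU fun B hB z hz => ?_).const_smul _).contDiffAt
    (hU.mem_nhds hA)
  rw [abs_of_pos hR, mem_sphere_zero_iff_norm] at hz
  have hz0 : z ≠ 0 := by rintro rfl; simp [hR.ne] at hz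
  have hunit : IsUnit (B - z • (1 : M →L[ℂ] M)) := by
    rw [← neg_sub, IsUnit.neg_iff]; exact hB z hz
  have hP : ContDiffAt ℝ k (rieszProjection R) B := contDiffAt_rieszProjection hR hB k
  have hQ : ContDiffAt ℝ k (fun p : (M →L[ℂ] M) × ℂ => 1 - rieszProjection R p.1) (B, z) :=
    contDiffAt_const.sub (hP.comp (f := Prod.fst) (B, z) contDiffAt_fst)
  have hinv : ContDiffAt ℝ k (fun p : (M →L[ℂ] M) × ℂ => Ring.inverse (p.1 - p.2 • (1 : M →L[ℂ] M)))
      (B, z) := (hunit.contDiffAt_ringInverse.comp (B, z)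
        (contDiff_fst.sub (contDiff_snd.smul contDiff_const)).contDiffAt).restrict_scalars ℝ
  have hzinv : ContDiffAt ℝ k (fun p : (M →L[ℂ] M) × ℂ => p.2⁻¹) (B, z) :=
    ((contDiffAt_inv ℂ hz0).comp (B, z) contDiffAt_snd).restrict_scalars ℝ
  exact hzinv.smul (hQ.mul (hinv.mul hQ))

end RieszProjection

theorem reduced_resolvent_derivs_vanish_general {n : ℕ} (k : ℕ)
    (L P S : ℝ → (Matrix (Fin n) (Fin n) ℂ →L[ℂ] Matrix (Fin n) (Fin n) ℂ))
    (s₀ R : ℝ) (hR : 0 < R)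
    (hL : ContDiff ℝ k L)
    (hres : ∀ᶠ s in nhds s₀, ∀ z : ℂ, ‖z‖ = R →
      IsUnit (z • (1 : Matrix (Fin n) (Fin n) ℂ →L[ℂ] Matrix (Fin n) (Fin n) ℂ) - L s))
    (hgap : ∀ᶠ s in nhds s₀, spectrum ℂ (L s) ∩ Metric.ball (0 : ℂ) R = {0})
    (hP : ∀ᶠ s in nhds s₀, P s = (2 * Real.pi * Complex.I)⁻¹ •
      (∮ z in C(0, R), Ring.inverse
        (z • (1 : Matrix (Fin n) (Fin n) ℂ →L[ℂ] Matrix (Fin n) (Fin n) ℂ) - L s)))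
    (hS : ∀ᶠ s in nhds s₀, Filter.Tendsto
      (fun z : ℂ => (1 - P s) ∘L Ring.inverse
          (L s - z • (1 : Matrix (Fin n) (Fin n) ℂ →L[ℂ] Matrix (Fin n) (Fin n) ℂ))
          ∘L (1 - P s))
      (nhdsWithin (0 : ℂ) {(0 : ℂ)}ᶜ) (nhds (S s)))
    (hder : ∀ j, 1 ≤ j → j ≤ k → iteratedDeriv j L s₀ = 0) :
    ∀ j, 1 ≤ j → j ≤ k → iteratedDeriv j S s₀ = 0 := by
  have hS_eq : S =ᶠ[𝓝 s₀] reducedResolvent R ∘ L := by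
    filter_upwards [hres, hgap, hP, hS] with s hres_s hgap_s hP_s hS_s
    change P s = rieszProjection R (L s) at hP_s
    exact eq_reducedResolvent_of_tendsto hR hres_s hgap_s (hP_s ▸ hS_s)
  have hS_smooth : ContDiffAt ℝ k (reducedResolvent R) (L s₀) :=
    contDiffAt_reducedResolvent hR hres.self_of_nhds k
  intro j hj hjk
  rw [hS_eq.iteratedDeriv_eq]
  exact iteratedDeriv_comp_eq_zero hS_smooth hL.contDiffAt hder hj hjk

/-- Under the same hypotheses as for the Riesz projection (C^k family with
isolated eigenvalue `0` and vanishing derivatives of `L` at `s₀` up to order `k`), the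
reduced resolvent `S(s) = lim_{z→0} Q(s)(L(s) − z)⁻¹ Q(s)` with `Q(s) = 1 − P(s)` also
satisfies `S^(j)(s₀) = 0` for `j = 1,…,k`. -/
theorem reduced_resolvent_derivs_vanish {n : ℕ} (k : ℕ)
    (L P S : ℝ → (Matrix (Fin n) (Fin n) ℂ →L[ℂ] Matrix (Fin n) (Fin n) ℂ))
    (s₀ R : ℝ) (hR : 0 < R)
    (hL : ContDiff ℝ k L)
    (hres : ∀ᶠ s in nhds s₀, ∀ z : ℂ, ‖z‖ = R →
      IsUnit (z • (1 : Matrix (Fin n) (Fin n) ℂ →L[ℂ] Matrix (Fin n) (Fin n) ℂ) - L s))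
    (hgap : ∀ᶠ s in nhds s₀, spectrum ℂ (L s) ∩ Metric.ball (0 : ℂ) R = {0})
    (hsemisimple : ∀ᶠ s in nhds s₀,
      LinearMap.ker (((L s) ^ 2 : Matrix (Fin n) (Fin n) ℂ →L[ℂ] Matrix (Fin n) (Fin n) ℂ) : Matrix (Fin n) (Fin n) ℂ →ₗ[ℂ] Matrix (Fin n) (Fin n) ℂ) =
        LinearMap.ker (L s : Matrix (Fin n) (Fin n) ℂ →ₗ[ℂ] Matrix (Fin n) (Fin n) ℂ))
    (hP : ∀ᶠ s in nhds s₀, P s = (2 * Real.pi * Complex.I)⁻¹ •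
      (∮ z in C(0, R), Ring.inverse
        (z • (1 : Matrix (Fin n) (Fin n) ℂ →L[ℂ] Matrix (Fin n) (Fin n) ℂ) - L s)))
    (hS : ∀ᶠ s in nhds s₀, Filter.Tendsto
      (fun z : ℂ => (1 - P s) ∘L Ring.inverse
          (L s - z • (1 : Matrix (Fin n) (Fin n) ℂ →L[ℂ] Matrix (Fin n) (Fin n) ℂ))
          ∘L (1 - P s))
      (nhdsWithin (0 : ℂ) {(0 : ℂ)}ᶜ) (nhds (S s)))
    (hder : ∀ j, 1 ≤ j → j ≤ k → iteratedDeriv j L s₀ = 0) :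
    ∀ j, 1 ≤ j → j ≤ k → iteratedDeriv j S s₀ = 0 :=
  reduced_resolvent_derivs_vanish_general k L P S s₀ R hR hL hres hgap hP hS hder
end

section
/- First-order coefficient formula: in the adiabatic expansion with ergodic generator, b₁(s) = S(s) Ṗ(s) σ(s) = −S(s)² L̇(s) σ(s), and hence ‖b₁(s)‖₁ ≤ ‖S(s)‖²_{1,1} ‖L̇(s)‖_{1,1}. -/
/-!
Since `P(t) σ(s) = Tr σ(s) • σ(t) = σ(t)`, differentiating in `t` gives `Ṗ σ = σ̇`, and
differentiating `L σ = 0` gives `L̇ σ = -L σ̇`. Hence `S² L̇ σ = -S (1 - P) σ̇ = -S σ̇ = -S Ṗ σ`.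
The bound is submultiplicativity of the induced norm together with `‖σ‖₁ = Tr σ = 1`. The induced
norm is a genuine supremum because the trace norm and the Frobenius norm are the `ℓ¹` and `ℓ²`
norms of the singular values, hence equivalent.
-/

open scoped ComplexOrder

attribute [local instance] Matrix.frobeniusNormedAddCommGroup Matrix.frobeniusNormedSpace

/-- The superoperator norm induced by the trace norm (the `1→1` norm): the supremum of
`‖T X‖₁` over `‖X‖₁ ≤ 1`. -/
noncomputable def indNorm {n : ℕ}
    (T : Matrix (Fin n) (Fin n) ℂ →L[ℂ] Matrix (Fin n) (Fin n) ℂ) : ℝ :=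
  sSup {c : ℝ | ∃ X, traceNorm X ≤ 1 ∧ c = traceNorm (T X)}


instance instContinuousSMulRealMatrixCLM {n : ℕ} :
    ContinuousSMul ℝ (Matrix (Fin n) (Fin n) ℂ →L[ℂ] Matrix (Fin n) (Fin n) ℂ) :=
  ⟨by
    have h : (fun p : ℝ × (Matrix (Fin n) (Fin n) ℂ →L[ℂ] Matrix (Fin n) (Fin n) ℂ) => p.1 • p.2)
        = fun p => (algebraMap ℝ ℂ p.1) • p.2 := by
      funext p; exact (algebraMap_smul ℂ p.1 p.2).symm
    rw [h]
    exact ((continuous_algebraMap ℝ ℂ).comp continuous_fst).smul continuous_snd⟩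

open scoped MatrixOrder
open Matrix

theorem Matrix.frobenius_norm_sq_eq_re_trace_mul_conjTranspose {m n : Type*} [Fintype m]
    [Fintype n] (A : Matrix m n ℂ) : ‖A‖ ^ 2 = (A * Aᴴ).trace.re := by
  rw [frobenius_norm_def, ← Real.rpow_natCast, ← Real.rpow_mul (by positivity),
    show (1 / 2 : ℝ) * (2 : ℕ) = 1 by norm_num, Real.rpow_one]
  simp only [Real.rpow_two, Matrix.trace, diag, mul_apply, conjTranspose_apply, Complex.re_sum]
  refine Finset.sum_congr rfl fun i _ => Finset.sum_congr rfl fun j _ => ?_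
  rw [Complex.star_def, Complex.mul_conj, Complex.normSq_eq_norm_sq, Complex.ofReal_re]

section SingularValues

variable {m : Type*} [Fintype m] [DecidableEq m]

-- Written with `Aᴴ * Aᴴᴴ`, as in `traceNorm`, so that `traceNorm A` is their sum by `rfl`.
noncomputable def singularValues (A : Matrix m m ℂ) (i : m) : ℝ :=
  Real.sqrt ((isHermitian_mul_conjTranspose_self Aᴴ).eigenvalues i)

theorem singularValues_nonneg (A : Matrix m m ℂ) (i : m) : 0 ≤ singularValues A i :=
  Real.sqrt_nonneg _

theorem traceNorm_eq_sum_singularValues (A : Matrix m m ℂ) :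
    traceNorm A = ∑ i, singularValues A i :=
  rfl

theorem traceNorm_nonneg (A : Matrix m m ℂ) : 0 ≤ traceNorm A :=
  Finset.sum_nonneg fun i _ => singularValues_nonneg A i

theorem frobenius_norm_sq_eq_sum_singularValues_sq (A : Matrix m m ℂ) :
    ‖A‖ ^ 2 = ∑ i, singularValues A i ^ 2 := by
  have hA := isHermitian_mul_conjTranspose_self Aᴴ
  rw [← frobenius_norm_conjTranspose, frobenius_norm_sq_eq_re_trace_mul_conjTranspose,
    hA.trace_eq_sum_eigenvalues, Complex.re_sum]
  refine Finset.sum_congr rfl fun i _ => ?_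
  rw [singularValues, Real.sq_sqrt ((posSemidef_self_mul_conjTranspose Aᴴ).eigenvalues_nonneg i)]
  rfl

theorem frobenius_norm_le_traceNorm (A : Matrix m m ℂ) : ‖A‖ ≤ traceNorm A := by
  refine abs_le_of_sq_le_sq' ?_ (traceNorm_nonneg A) |>.2
  rw [frobenius_norm_sq_eq_sum_singularValues_sq, traceNorm_eq_sum_singularValues]
  exact Finset.sum_sq_le_sq_sum_of_nonneg fun i _ => singularValues_nonneg A i

theorem traceNorm_le_sqrt_card_mul_frobenius_norm (A : Matrix m m ℂ) :
    traceNorm A ≤ Real.sqrt (Fintype.card m) * ‖A‖ := by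
  rw [← Real.sqrt_sq (norm_nonneg A), ← Real.sqrt_mul (Nat.cast_nonneg _),
    frobenius_norm_sq_eq_sum_singularValues_sq, traceNorm_eq_sum_singularValues]
  refine Real.le_sqrt_of_sq_le ?_
  simpa using sq_sum_le_card_mul_sum_sq (s := Finset.univ) (f := singularValues A)

end SingularValues

section TraceNormAbs

variable {m : Type*} [Fintype m] [DecidableEq m]

theorem Matrix.IsHermitian.trace_cfc {𝕜 : Type*} [RCLike 𝕜] {A : Matrix m m 𝕜}
    (hA : A.IsHermitian) (f : ℝ → ℝ) :
    (cfc f A).trace = ∑ i, (f (hA.eigenvalues i) : 𝕜) := by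
  rw [hA.cfc_eq, IsHermitian.cfc, Unitary.conjStarAlgAut_apply, trace_mul_cycle,
    Unitary.coe_star_mul_self, one_mul, trace_diagonal]
  rfl

theorem traceNorm_eq_re_trace_abs (A : Matrix m m ℂ) : traceNorm A = (CFC.abs A).trace.re := by
  have hA := isHermitian_mul_conjTranspose_self Aᴴ
  have hstar : star A * A = Aᴴ * Aᴴᴴ := by rw [conjTranspose_conjTranspose, star_eq_conjTranspose]
  rw [CFC.abs, CFC.sqrt_eq_real_sqrt _ (star_mul_self_nonneg A), cfcₙ_eq_cfc, hstar,
    hA.trace_cfc, Complex.re_sum]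
  rfl

theorem traceNorm_neg (A : Matrix m m ℂ) : traceNorm (-A) = traceNorm A := by
  rw [traceNorm_eq_re_trace_abs, CFC.abs_neg, ← traceNorm_eq_re_trace_abs]

theorem traceNorm_zero : traceNorm (0 : Matrix m m ℂ) = 0 := by
  rw [traceNorm_eq_re_trace_abs, CFC.abs_zero, trace_zero, Complex.zero_re]

theorem traceNorm_smul (c : ℂ) (A : Matrix m m ℂ) : traceNorm (c • A) = ‖c‖ * traceNorm A := by
  rw [traceNorm_eq_re_trace_abs, CFC.abs_smul, trace_smul, Complex.smul_re, smul_eq_mul,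
    ← traceNorm_eq_re_trace_abs]

theorem Matrix.PosSemidef.traceNorm_eq {A : Matrix m m ℂ} (hA : A.PosSemidef) :
    traceNorm A = A.trace.re := by
  rw [traceNorm_eq_re_trace_abs, CFC.abs_of_nonneg A hA.nonneg]

end TraceNormAbs

section IndNorm

variable {n : ℕ} (T : Matrix (Fin n) (Fin n) ℂ →L[ℂ] Matrix (Fin n) (Fin n) ℂ)

theorem bddAbove_traceNorm_apply_of_traceNorm_le_one :
    BddAbove {c : ℝ | ∃ X, traceNorm X ≤ 1 ∧ c = traceNorm (T X)} := by
  -- The Frobenius norm is only a local instance, so `T` has no operator norm: rebundle it.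
  obtain ⟨C, hC0, hC⟩ : ∃ C, 0 ≤ C ∧ ∀ X, ‖T X‖ ≤ C * ‖X‖ :=
    ⟨_, norm_nonneg _, (LinearMap.toContinuousLinearMap T.toLinearMap).le_opNorm⟩
  refine ⟨Real.sqrt n * C, ?_⟩
  rintro c ⟨X, hX, rfl⟩
  calc traceNorm (T X) ≤ Real.sqrt n * ‖T X‖ := by
        simpa using traceNorm_le_sqrt_card_mul_frobenius_norm (T X)
    _ ≤ Real.sqrt n * (C * ‖X‖) := by grw [hC X]
    _ ≤ Real.sqrt n * C := by
        grw [frobenius_norm_le_traceNorm X, hX, mul_one]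

theorem traceNorm_apply_le_indNorm {X : Matrix (Fin n) (Fin n) ℂ} (hX : traceNorm X ≤ 1) :
    traceNorm (T X) ≤ indNorm T :=
  le_csSup (bddAbove_traceNorm_apply_of_traceNorm_le_one T) ⟨X, hX, rfl⟩

theorem indNorm_nonneg : 0 ≤ indNorm T :=
  (traceNorm_nonneg _).trans (traceNorm_apply_le_indNorm T (X := 0) (by simp [traceNorm_zero]))

theorem traceNorm_apply_le_indNorm_mul (X : Matrix (Fin n) (Fin n) ℂ) :
    traceNorm (T X) ≤ indNorm T * traceNorm X := by
  rcases (traceNorm_nonneg X).eq_or_lt with h0 | hpos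
  · have hX : X = 0 := norm_le_zero_iff.mp ((frobenius_norm_le_traceNorm X).trans h0.ge)
    simp [hX, traceNorm_zero]
  · have hnorm : ‖((traceNorm X)⁻¹ : ℂ)‖ = (traceNorm X)⁻¹ := by
      rw [← Complex.ofReal_inv, Complex.norm_real, Real.norm_of_nonneg (inv_nonneg.2 hpos.le)]
    have hunit : traceNorm (((traceNorm X)⁻¹ : ℂ) • X) ≤ 1 := by
      rw [traceNorm_smul, hnorm, inv_mul_cancel₀ hpos.ne']
    have h := traceNorm_apply_le_indNorm T hunit
    rwa [map_smul, traceNorm_smul, hnorm, inv_mul_le_iff₀ hpos, mul_comm] at h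

end IndNorm

theorem HasDerivAt.complex_clm_apply {n : ℕ}
    {F : ℝ → Matrix (Fin n) (Fin n) ℂ →L[ℂ] Matrix (Fin n) (Fin n) ℂ}
    {F' : Matrix (Fin n) (Fin n) ℂ →L[ℂ] Matrix (Fin n) (Fin n) ℂ}
    {x : ℝ → Matrix (Fin n) (Fin n) ℂ} {x' : Matrix (Fin n) (Fin n) ℂ} {s : ℝ}
    (hF : HasDerivAt F F' s) (hx : HasDerivAt x x' s) :
    HasDerivAt (fun t => F t (x t)) (F' (x s) + F s x') s :=
  ((ContinuousLinearMap.restrictScalarsIsometry ℂ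
    (Matrix (Fin n) (Fin n) ℂ) (Matrix (Fin n) (Fin n) ℂ) ℝ ℝ).toContinuousLinearMap.hasFDerivAt
    |>.comp_hasDerivAt s hF).clm_apply hx

theorem first_order_coefficient_general {n : ℕ}
    (L L' P P' S : ℝ → (Matrix (Fin n) (Fin n) ℂ →L[ℂ] Matrix (Fin n) (Fin n) ℂ))
    (σ : ℝ → Matrix (Fin n) (Fin n) ℂ)
    (hσ : ∀ s, L s (σ s) = 0)
    (hσpsd : ∀ s, (σ s).PosSemidef)
    (htr : ∀ s, Matrix.trace (σ s) = 1)
    (hP : ∀ s X, P s X = Matrix.trace X • σ s)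
    (hSQ : ∀ s, (S s) ∘L (1 - P s) = S s ∧ (1 - P s) ∘L (S s) = S s)
    (hSL : ∀ s, (S s) ∘L (L s) = 1 - P s ∧ (L s) ∘L (S s) = 1 - P s)
    (hLd : ∀ s, HasDerivAt L (L' s) s)
    (hPd : ∀ s, HasDerivAt P (P' s) s) :
    ∀ s, S s (P' s (σ s)) = -(S s (S s (L' s (σ s)))) ∧
      traceNorm (S s (P' s (σ s))) ≤ indNorm (S s) ^ 2 * indNorm (L' s) := by
  intro s
  have hσ' : HasDerivAt σ (P' s (σ s)) s := by
    have hPσ : (fun t => P t (σ s)) = σ := funext fun t => by rw [hP, htr, one_smul]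
    simpa [hPσ] using (hPd s).complex_clm_apply (hasDerivAt_const s (σ s))
  have hL'σ : L' s (σ s) = -(L s (P' s (σ s))) := by
    have h := (hLd s).complex_clm_apply hσ'
    simp only [hσ] at h
    exact eq_neg_of_add_eq_zero_left ((hasDerivAt_const s 0).unique h).symm
  have hcoeff : S s (P' s (σ s)) = -(S s (S s (L' s (σ s)))) := by
    rw [hL'σ, map_neg, map_neg, neg_neg, ← ContinuousLinearMap.comp_apply (S s) (L s), (hSL s).1,
      ← ContinuousLinearMap.comp_apply (S s) (1 - P s), (hSQ s).1]
  have hσnorm : traceNorm (σ s) = 1 := by rw [(hσpsd s).traceNorm_eq, htr, Complex.one_re]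
  refine ⟨hcoeff, ?_⟩
  calc traceNorm (S s (P' s (σ s)))
      = traceNorm (S s (S s (L' s (σ s)))) := by rw [hcoeff, traceNorm_neg]
    _ ≤ indNorm (S s) * (indNorm (S s) * (indNorm (L' s) * traceNorm (σ s))) := by
        grw [traceNorm_apply_le_indNorm_mul, traceNorm_apply_le_indNorm_mul,
          traceNorm_apply_le_indNorm_mul]
        all_goals exact indNorm_nonneg _
    _ = indNorm (S s) ^ 2 * indNorm (L' s) := by rw [hσnorm]; ring

/-- First-order coefficient: in the adiabatic expansion with ergodic
generator, `b₁(s) = S(s) Ṗ(s) σ(s) = −S(s)² L̇(s) σ(s)`, and hence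
`‖b₁(s)‖₁ ≤ ‖S(s)‖²_{1,1} ‖L̇(s)‖_{1,1}`. -/
theorem first_order_coefficient {n : ℕ}
    (L L' P P' S : ℝ → (Matrix (Fin n) (Fin n) ℂ →L[ℂ] Matrix (Fin n) (Fin n) ℂ))
    (σ : ℝ → Matrix (Fin n) (Fin n) ℂ)
    (hσ : ∀ s, L s (σ s) = 0)
    (hσpsd : ∀ s, (σ s).PosSemidef)
    (htr : ∀ s, Matrix.trace (σ s) = 1)
    (hP : ∀ s X, P s X = Matrix.trace X • σ s)
    (hSQ : ∀ s, (S s) ∘L (1 - P s) = S s ∧ (1 - P s) ∘L (S s) = S s)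
    (hSL : ∀ s, (S s) ∘L (L s) = 1 - P s ∧ (L s) ∘L (S s) = 1 - P s)
    (hLd : ∀ s, HasDerivAt L (L' s) s)
    (hPd : ∀ s, HasDerivAt P (P' s) s)
    (hσd : Differentiable ℝ σ) :
    ∀ s, S s (P' s (σ s)) = -(S s (S s (L' s (σ s)))) ∧
      traceNorm (S s (P' s (σ s))) ≤ indNorm (S s) ^ 2 * indNorm (L' s) :=
  first_order_coefficient_general L L' P P' S σ hσ hσpsd htr hP hSQ hSL hLd hPd
end
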